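/- arXiv:1408.3115 — 4 statements merged into one kernel-verified Lean document; each statement's English description precedes it below -/
import Mathlib

section
/- Let τ > 1/2 and ρ > 0. Then for every positive integer d, the sum ∑_{i=1}^{d} i^{−2τ}/(i^{−2τ} + ρ) = ∑_{i=1}^{d} 1/(1 + i^{2τ} ρ) is bounded above by (π / (2τ · sin(π/(2τ)))) · ρ^{−1/(2τ)}. In particular, if the eigenvalues of the sample covariance matrix follow the polynomial decay σ_i² = i^{−2τ}, then the numerical rank γ(C, ρ) = ∑_{i=1}^d σ_i²/(σ_i² + ρ) is O(ρ^{−1/(2τ)}). -/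
/-!
The summand `(1 + x ^ (2τ) ρ)⁻¹` is antitone in `x`, so the sum is bounded by its integral
over `(0, ∞)`. The scaling `x ↦ ρ ^ (-1/(2τ)) x` and the substitution `u = x ^ (2τ)` reduce that
integral to `∫₀^∞ u ^ (a - 1) / (1 + u) du` with `a = 1/(2τ)`, which `u = t / (1 - t)` turns into
the Beta integral `B(a, 1 - a) = Γ(a) Γ(1 - a) = π / sin (π a)`.
-/

open Real Finset

section

open MeasureTheory

theorem integral_rpow_mul_one_sub_rpow_neg {a : ℝ} (ha : 0 < a) (ha1 : a < 1) :
    ∫ t in (0 : ℝ)..1, t ^ (a - 1) * (1 - t) ^ (-a) = π / sin (π * a) := by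
  have hbeta : Complex.betaIntegral a (1 - a) = ((π / sin (π * a) : ℝ) : ℂ) := by
    have h := Complex.Gamma_mul_Gamma_eq_betaIntegral (s := (a : ℂ)) (t := 1 - (a : ℂ))
      (by simpa using ha) (by simp [ha1])
    rw [add_sub_cancel, Complex.Gamma_one, one_mul, Complex.Gamma_mul_Gamma_one_sub] at h
    rw [← h]
    push_cast [Complex.ofReal_sin]
    rfl
  have hreal : Complex.betaIntegral a (1 - a)
      = ((∫ t in (0 : ℝ)..1, t ^ (a - 1) * (1 - t) ^ (-a) : ℝ) : ℂ) := by
    rw [Complex.betaIntegral, ← intervalIntegral.integral_ofReal]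
    refine intervalIntegral.integral_congr fun t ht => ?_
    rw [Set.uIcc_of_le zero_le_one] at ht
    push_cast
    rw [Complex.ofReal_cpow ht.1, Complex.ofReal_cpow (sub_nonneg.mpr ht.2)]
    push_cast
    ring_nf
  exact_mod_cast hreal.symm.trans hbeta

theorem image_div_one_sub_Ioo : (fun t : ℝ => t / (1 - t)) '' Set.Ioo 0 1 = Set.Ioi 0 := by
  ext u
  refine ⟨?_, fun hu => ⟨u / (1 + u), ?_, ?_⟩⟩
  · rintro ⟨t, ⟨ht0, ht1⟩, rfl⟩
    exact div_pos ht0 (sub_pos.mpr ht1)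
  · have hu : (0 : ℝ) < u := hu
    exact ⟨by positivity, (div_lt_one (by positivity)).mpr (by linarith)⟩
  · have hu : (0 : ℝ) < u := hu
    field_simp
    ring

theorem integral_Ioi_rpow_div_one_add {a : ℝ} (ha : 0 < a) (ha1 : a < 1) :
    ∫ u in Set.Ioi (0 : ℝ), u ^ (a - 1) / (1 + u) = π / sin (π * a) := by
  have hderiv : ∀ t ∈ Set.Ioo (0 : ℝ) 1,
      HasDerivWithinAt (fun t : ℝ => t / (1 - t)) ((1 - t) ^ 2)⁻¹ (Set.Ioo 0 1) t := by
    intro t ht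
    have hs : (1 : ℝ) - t ≠ 0 := (sub_pos.mpr ht.2).ne'
    refine (((hasDerivAt_id t).div ((hasDerivAt_id t).const_sub 1) hs).congr_deriv ?_)
      |>.hasDerivWithinAt
    simp only [id]
    field_simp
    ring
  have hinj : Set.InjOn (fun t : ℝ => t / (1 - t)) (Set.Ioo 0 1) := by
    intro x hx y hy hxy
    have : (1 : ℝ) - x ≠ 0 := (sub_pos.mpr hx.2).ne'
    have : (1 : ℝ) - y ≠ 0 := (sub_pos.mpr hy.2).ne'
    field_simp at hxy
    linarith
  rw [← image_div_one_sub_Ioo, integral_image_eq_integral_abs_deriv_smul measurableSet_Ioo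
    hderiv hinj, ← integral_rpow_mul_one_sub_rpow_neg ha ha1,
    intervalIntegral.integral_of_le zero_le_one, integral_Ioc_eq_integral_Ioo]
  refine setIntegral_congr_fun measurableSet_Ioo fun t ⟨ht0, ht1⟩ => ?_
  have hs : 0 < 1 - t := sub_pos.mpr ht1
  rw [smul_eq_mul, abs_of_pos (by positivity), div_rpow ht0.le hs.le, rpow_sub_one hs.ne',
    rpow_neg hs.le]
  field_simp
  ring

theorem sin_pi_div_pos {p : ℝ} (hp : 1 < p) : 0 < sin (π / p) :=
  sin_pos_of_pos_of_lt_pi (div_pos pi_pos (by linarith)) (div_lt_self pi_pos hp)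

theorem integral_Ioi_inv_one_add_rpow {p : ℝ} (hp : 1 < p) :
    ∫ x in Set.Ioi (0 : ℝ), (1 + x ^ p)⁻¹ = π / (p * sin (π / p)) := by
  have hp0 : 0 < p := by linarith
  have h := integral_comp_rpow_Ioi_of_pos (g := fun u : ℝ => u ^ (1 / p - 1) / (1 + u)) hp0
  rw [integral_Ioi_rpow_div_one_add (by positivity) ((div_lt_one hp0).mpr hp)] at h
  have hsin := sin_pi_div_pos hp
  have hintegrand : ∀ x ∈ Set.Ioi (0 : ℝ),
      (p * x ^ (p - 1)) • ((x ^ p) ^ (1 / p - 1) / (1 + x ^ p)) = p * (1 + x ^ p)⁻¹ := by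
    intro x (hx : 0 < x)
    rw [smul_eq_mul, ← rpow_mul hx.le, mul_sub, mul_one_div_cancel hp0.ne', mul_one, div_eq_mul_inv,
      ← mul_assoc, mul_assoc p, ← rpow_add hx, sub_add_sub_cancel, sub_self, rpow_zero, mul_one]
  rw [setIntegral_congr_fun measurableSet_Ioi hintegrand, integral_const_mul, mul_one_div] at h
  rw [eq_div_iff (by positivity), mul_comm, mul_right_comm, h, div_mul_cancel₀ _ hsin.ne']

theorem integral_Ioi_inv_one_add_rpow_mul {p ρ : ℝ} (hp : 1 < p) (hρ : 0 < ρ) :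
    ∫ x in Set.Ioi (0 : ℝ), (1 + x ^ p * ρ)⁻¹ = π / (p * sin (π / p)) * ρ ^ (-(1 / p)) := by
  have hc : 0 < ρ ^ (1 / p) := rpow_pos_of_pos hρ _
  have h := integral_comp_mul_left_Ioi (fun x : ℝ => (1 + x ^ p)⁻¹) 0 hc
  rw [mul_zero, integral_Ioi_inv_one_add_rpow hp, smul_eq_mul, ← rpow_neg hρ.le] at h
  rw [mul_comm, ← h]
  refine setIntegral_congr_fun measurableSet_Ioi fun x (hx : 0 < x) => ?_
  rw [mul_rpow hc.le hx.le, ← rpow_mul hρ.le, one_div_mul_cancel (by linarith), rpow_one, mul_comm]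

theorem integrableOn_Ioi_inv_one_add_rpow_mul {p ρ : ℝ} (hp : 1 < p) (hρ : 0 < ρ) :
    IntegrableOn (fun x : ℝ => (1 + x ^ p * ρ)⁻¹) (Set.Ioi 0) := by
  -- a non-integrable function has Bochner integral `0`
  refine Integrable.of_integral_ne_zero ?_
  rw [integral_Ioi_inv_one_add_rpow_mul hp hρ]
  have := sin_pi_div_pos hp
  have : 0 < p := by linarith
  positivity

theorem antitoneOn_inv_one_add_rpow_mul {p ρ : ℝ} (hp : 0 ≤ p) (hρ : 0 ≤ ρ) :
    AntitoneOn (fun x : ℝ => (1 + x ^ p * ρ)⁻¹) (Set.Ici 0) := by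
  intro x (hx : 0 ≤ x) y _ hxy
  have := rpow_nonneg hx p
  exact inv_anti₀ (by positivity) (by gcongr)

theorem AntitoneOn.sum_Icc_le_integral_Ioi {f : ℝ → ℝ} (d : ℕ) (anti : AntitoneOn f (Set.Ici 0))
    (integrable : IntegrableOn f (Set.Ioi 0)) (nonneg : ∀ x ∈ Set.Ioi 0, 0 ≤ f x) :
    ∑ i ∈ Icc 1 d, f i ≤ ∫ x in Set.Ioi 0, f x := by
  have h := AntitoneOn.sum_Ico_le_integral (a := 0) (b := d)
    (anti.mono (by simp [Set.Icc_subset_Ici_self])) (by simpa using integrable)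
    (by simpa using nonneg)
  rw [← Ico_add_one_right_eq_Icc, ← zero_add 1, ← sum_Ico_add']
  simpa using h

theorem rpow_neg_div_rpow_neg_add {x : ℝ} (hx : 0 < x) (p ρ : ℝ) :
    x ^ (-p) / (x ^ (-p) + ρ) = 1 / (1 + x ^ p * ρ) := by
  have hy : x ^ p ≠ 0 := (rpow_pos_of_pos hx p).ne'
  rw [rpow_neg hx.le, ← mul_div_mul_left 1 _ (inv_ne_zero hy), mul_one, mul_add, mul_one,
    inv_mul_cancel_left₀ hy]

end

/-- polynomial eigenvalue decay.  For `τ > 1/2`, `ρ > 0` and any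
positive integer `d`,
`∑_{i=1}^d i^{-2τ}/(i^{-2τ} + ρ) = ∑_{i=1}^d 1/(1 + i^{2τ} ρ)
   ≤ (π / (2τ sin(π/(2τ)))) ρ^{-1/(2τ)}`. -/
theorem numerical_rank_poly_decay (τ ρ : ℝ) (hτ : 1 / 2 < τ) (hρ : 0 < ρ) :
    ∀ d : ℕ, 0 < d →
      (∑ i ∈ Finset.Icc 1 d, (i : ℝ) ^ (-(2 * τ)) / ((i : ℝ) ^ (-(2 * τ)) + ρ)
          = ∑ i ∈ Finset.Icc 1 d, 1 / (1 + (i : ℝ) ^ (2 * τ) * ρ)) ∧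
      ∑ i ∈ Finset.Icc 1 d, 1 / (1 + (i : ℝ) ^ (2 * τ) * ρ)
          ≤ π / (2 * τ * Real.sin (π / (2 * τ))) * ρ ^ (-(1 / (2 * τ))) := by
  intro d _
  have hp : 1 < 2 * τ := by linarith
  refine ⟨sum_congr rfl fun i hi => rpow_neg_div_rpow_neg_add ?_ _ _, ?_⟩
  · exact_mod_cast (mem_Icc.mp hi).1
  rw [← integral_Ioi_inv_one_add_rpow_mul hp hρ]
  simp only [one_div]
  refine AntitoneOn.sum_Icc_le_integral_Ioi d
    (antitoneOn_inv_one_add_rpow_mul (by linarith) hρ.le)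
    (integrableOn_Ioi_inv_one_add_rpow_mul hp hρ) fun x (hx : 0 < x) => ?_
  have := rpow_nonneg hx.le (2 * τ)
  positivity
end

section
/- Let τ > 0 and ρ > 0. Then for every positive integer d, the sum ∑_{i=1}^{d} e^{−τ i}/(e^{−τ i} + ρ) is bounded above by (1/τ)·(log(1 + ρ) − log ρ). In particular, if the eigenvalues of the sample covariance matrix follow the exponential decay σ_i² = e^{−τ i}, then the numerical rank γ(C, ρ) = ∑_{i=1}^d σ_i²/(σ_i² + ρ) is O(log(1/ρ)). -/
open Real Finset

/-- exponential eigenvalue decay.  For `τ > 0`, `ρ > 0` and any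
positive integer `d`,
`∑_{i=1}^d e^{-τ i}/(e^{-τ i} + ρ) ≤ (1/τ) (log(1 + ρ) - log ρ)`. -/
theorem numerical_rank_exp_decay (τ ρ : ℝ) (hτ : 0 < τ) (hρ : 0 < ρ) :
    ∀ d : ℕ, 0 < d →
      ∑ i ∈ Finset.Icc 1 d, Real.exp (-τ * i) / (Real.exp (-τ * i) + ρ)
        ≤ (1 / τ) * (Real.log (1 + ρ) - Real.log ρ) := by
  intro d hd
  set g : ℕ → ℝ := fun i => Real.log (Real.exp (-τ * i) + ρ) with hg
  have key : ∀ j : ℕ,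
      Real.exp (-τ * ((j : ℝ) + 1)) / (Real.exp (-τ * ((j : ℝ) + 1)) + ρ)
        ≤ (1 / τ) * (g j - g (j + 1)) := by
    intro j
    set b := Real.exp (-τ * ((j : ℝ) + 1)) with hb
    have hb0 : 0 < b := Real.exp_pos _
    set t := b / (b + ρ) with ht
    have htden : 0 < b + ρ := by positivity
    have ht0 : 0 ≤ t := by positivity
    have ht1 : t ≤ 1 := by rw [ht, div_le_one htden]; linarith
    have hexp : Real.exp (t * τ) ≤ 1 + t * (Real.exp τ - 1) := by
      have h := convexOn_exp.2 (Set.mem_univ (0 : ℝ)) (Set.mem_univ τ)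
        (sub_nonneg.2 ht1) ht0 (by ring)
      simp only [smul_eq_mul, mul_zero, zero_add, Real.exp_zero, mul_one] at h
      linarith
    have hetau : (1 : ℝ) ≤ Real.exp τ := by
      have := Real.add_one_le_exp τ; linarith
    have hposcomb : 0 < 1 + t * (Real.exp τ - 1) := by nlinarith
    have hlog : τ * t ≤ Real.log (1 + t * (Real.exp τ - 1)) := by
      rw [Real.le_log_iff_exp_le hposcomb, mul_comm]; exact hexp
    have hab : Real.exp (-τ * (j : ℝ)) = Real.exp τ * b := by
      rw [hb, ← Real.exp_add]; ring_nf
    have heq : 1 + t * (Real.exp τ - 1) = (Real.exp (-τ * (j : ℝ)) + ρ) / (b + ρ) := by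
      rw [hab, ht]; field_simp; ring
    have hlog2 : τ * t ≤ g j - g (j + 1) := by
      have hnum : 0 < Real.exp (-τ * (j : ℝ)) + ρ := by positivity
      rw [heq, Real.log_div (ne_of_gt hnum) (ne_of_gt htden)] at hlog
      have hgj1 : g (j + 1) = Real.log (b + ρ) := by
        simp only [hg, hb]; push_cast; ring_nf
      show τ * t ≤ Real.log (Real.exp (-τ * (j:ℕ)) + ρ) - Real.log (Real.exp (-τ * ((j:ℕ)+1:ℕ)) + ρ)
      push_cast
      exact hlog
    calc t = (1 / τ) * (τ * t) := by field_simp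
      _ ≤ (1 / τ) * (g j - g (j + 1)) := by
          apply mul_le_mul_of_nonneg_left hlog2 (by positivity)
  have hsum : ∑ i ∈ Finset.Icc 1 d, Real.exp (-τ * i) / (Real.exp (-τ * i) + ρ)
      = ∑ j ∈ Finset.range d, Real.exp (-τ * ((j : ℝ) + 1)) / (Real.exp (-τ * ((j : ℝ) + 1)) + ρ) := by
    rw [← Finset.Ico_add_one_right_eq_Icc, Finset.sum_Ico_eq_sum_range]
    apply Finset.sum_congr rfl
    intro j _
    push_cast
    ring_nf
  rw [hsum]
  have h1 : ∑ j ∈ Finset.range d, Real.exp (-τ * ((j : ℝ) + 1)) / (Real.exp (-τ * ((j : ℝ) + 1)) + ρ)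
      ≤ ∑ j ∈ Finset.range d, (1 / τ) * (g j - g (j + 1)) :=
    Finset.sum_le_sum fun j _ => key j
  have h2 : ∑ j ∈ Finset.range d, (1 / τ) * (g j - g (j + 1))
      = (1 / τ) * (g 0 - g d) := by
    rw [← Finset.mul_sum, Finset.sum_range_sub']
  have hg0 : g 0 = Real.log (1 + ρ) := by simp [hg]
  have hgd : Real.log ρ ≤ g d := by
    apply Real.log_le_log hρ
    have := Real.exp_pos (-τ * (d : ℝ)); linarith
  calc _ ≤ (1 / τ) * (g 0 - g d) := by rw [← h2]; exact h1
    _ ≤ (1 / τ) * (Real.log (1 + ρ) - Real.log ρ) := by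
        apply mul_le_mul_of_nonneg_left _ (by positivity)
        rw [hg0]; linarith
end

section
/- Let x₁, …, x_n ∈ ℝ^d, let y₁, …, y_n lie in a label set Y, let ℓ : ℝ × Y → ℝ, let β > 0 and λ > 0, set ρ := λ/β, C := (1/n) ∑_{i=1}^n x_i x_iᵀ, H := ρ I + C (symmetric positive definite), and φ(z, y) := ℓ(z, y) − (β/2)z². Let H^{1/2} denote the positive semidefinite square root of H. Then for every w ∈ ℝ^d, (1/n) ∑_{i=1}^n ℓ(wᵀx_i, y_i) + (λ/2)‖w‖₂² = (1/n) ∑_{i=1}^n φ((H^{1/2}w)ᵀ(H^{−1/2}x_i), y_i) + (β/2)‖H^{1/2}w‖₂². Consequently, the infimum over v ∈ ℝ^d of (1/n) ∑_{i=1}^n φ(vᵀ H^{−1/2} x_i, y_i) + (β/2)‖v‖₂² equals the infimum over w ∈ ℝ^d of (1/n) ∑_{i=1}^n ℓ(wᵀx_i, y_i) + (λ/2)‖w‖₂². -/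
/-!
The substitution `v = H^{1/2} w` is a bijection of `ℝ^d`, and it turns the data term
`wᵀxᵢ` into `vᵀ H^{-1/2} xᵢ` and the regularizer into `‖v‖² = wᵀ H w = ρ‖w‖² + (1/n) ∑ (wᵀxᵢ)²`.
The quadratic part `(β/2)(1/n) ∑ (wᵀxᵢ)²` is exactly what `φ` subtracts from `ℓ`, and
`(β/2) ρ = λ/2`; so the two objectives agree along the substitution and have the same infimum.
-/

open Matrix Finset

section
open scoped ComplexOrder

/-- The square root of a positive semidefinite matrix, as defined in Mathlib (December 2024). -/
noncomputable def Matrix.PosSemidef.sqrt {n 𝕜 : Type*} [Fintype n] [DecidableEq n] [RCLike 𝕜]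
    {A : Matrix n n 𝕜} (hA : A.PosSemidef) : Matrix n n 𝕜 :=
  hA.1.eigenvectorUnitary.1 * diagonal ((↑) ∘ (√·) ∘ hA.1.eigenvalues) *
    (star hA.1.eigenvectorUnitary : Matrix n n 𝕜)

end

namespace Matrix

section
open scoped ComplexOrder

variable {n 𝕜 : Type*} [Fintype n] [DecidableEq n] [RCLike 𝕜] {A : Matrix n n 𝕜}

theorem PosSemidef.isHermitian_sqrt (hA : A.PosSemidef) : hA.sqrt.IsHermitian := by
  have := isHermitian_mul_mul_conjTranspose (hA.1.eigenvectorUnitary : Matrix n n 𝕜)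
    (A := diagonal ((↑) ∘ (√·) ∘ hA.1.eigenvalues)) (by simp [IsHermitian])
  rwa [← star_eq_conjTranspose] at this

theorem PosSemidef.sqrt_mul_self (hA : A.PosSemidef) : hA.sqrt * hA.sqrt = A := by
  set U : Matrix n n 𝕜 := (hA.1.eigenvectorUnitary : Matrix n n 𝕜)
  have hUU : star U * U = 1 := Unitary.coe_star_mul_self _
  conv_rhs => rw [hA.1.spectral_theorem, Unitary.conjStarAlgAut_apply]
  simp only [sqrt, Matrix.mul_assoc]
  rw [← Matrix.mul_assoc (star U) U, hUU, Matrix.one_mul, ← Matrix.mul_assoc (diagonal _),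
    diagonal_mul_diagonal]
  congr 3
  funext i
  simp only [Function.comp_apply, ← RCLike.ofReal_mul, Real.mul_self_sqrt (hA.eigenvalues_nonneg i)]

theorem PosDef.isUnit_sqrt (hA : A.PosDef) : IsUnit hA.posSemidef.sqrt :=
  isUnit_of_mul_isUnit_left (hA.posSemidef.sqrt_mul_self.symm ▸ hA.isUnit)

end

variable {m ι : Type*} [Fintype m] [Fintype ι]

theorem dotProduct_vecMulVec_self_mulVec {R : Type*} [CommSemiring R] (a w : m → R) :
    w ⬝ᵥ vecMulVec a a *ᵥ w = (w ⬝ᵥ a) ^ 2 := by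
  rw [vecMulVec_mulVec, dotProduct_comm a, op_smul_eq_smul, dotProduct_smul, smul_eq_mul, sq]

theorem dotProduct_regularizedCovariance_mulVec {R : Type*} [CommRing R] [DecidableEq m]
    (ρ c : R) (x : ι → m → R) (w : m → R) :
    w ⬝ᵥ (ρ • (1 : Matrix m m R) + c • ∑ i, vecMulVec (x i) (x i)) *ᵥ w
      = ρ * (w ⬝ᵥ w) + c * ∑ i, (w ⬝ᵥ x i) ^ 2 := by
  simp only [add_mulVec, smul_mulVec, one_mulVec, sum_mulVec, dotProduct_add, dotProduct_smul,
    dotProduct_sum, dotProduct_vecMulVec_self_mulVec, smul_eq_mul]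

variable {R : Type*} [CommRing R] {S : Matrix m m R}

theorem IsSymm.mulVec_dotProduct (hS : S.IsSymm) (w u : m → R) :
    S *ᵥ w ⬝ᵥ u = w ⬝ᵥ S *ᵥ u := by
  rw [dotProduct_mulVec, ← vecMul_transpose, hS.eq]

theorem IsSymm.mulVec_dotProduct_inv_mulVec [DecidableEq m] (hS : S.IsSymm) (hSu : IsUnit S)
    (w u : m → R) : S *ᵥ w ⬝ᵥ S⁻¹ *ᵥ u = w ⬝ᵥ u := by
  rw [hS.mulVec_dotProduct, mulVec_mulVec, mul_nonsing_inv _ ((isUnit_iff_isUnit_det S).mp hSu),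
    one_mulVec]

theorem IsSymm.mulVec_dotProduct_mulVec_self (hS : S.IsSymm) (w : m → R) :
    S *ᵥ w ⬝ᵥ S *ᵥ w = w ⬝ᵥ (S * S) *ᵥ w := by
  rw [hS.mulVec_dotProduct, mulVec_mulVec]

end Matrix

theorem regularized_loss_eq_preconditioned {m ι Y : Type*} [Fintype m] [DecidableEq m]
    [Fintype ι] (x : ι → m → ℝ) (y : ι → Y) (ℓ φ : ℝ → Y → ℝ) {β lam ρ c : ℝ}
    (hβρ : β * ρ = lam) (hφ : ∀ z y', φ z y' = ℓ z y' - β / 2 * z ^ 2) {S : Matrix m m ℝ}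
    (hS : S.IsSymm) (hSu : IsUnit S) (hSS : S * S = ρ • 1 + c • ∑ i, vecMulVec (x i) (x i))
    (w : m → ℝ) :
    c * ∑ i, ℓ (w ⬝ᵥ x i) (y i) + lam / 2 * (w ⬝ᵥ w)
      = c * ∑ i, φ (S *ᵥ w ⬝ᵥ S⁻¹ *ᵥ x i) (y i) + β / 2 * (S *ᵥ w ⬝ᵥ S *ᵥ w) := by
  simp only [hS.mulVec_dotProduct_inv_mulVec hSu, hS.mulVec_dotProduct_mulVec_self, hSS,
    dotProduct_regularizedCovariance_mulVec, hφ, sum_sub_distrib, ← mul_sum]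
  subst hβρ
  ring

theorem preconditioned_problem_equivalent_general
    {Y : Type*} (d n : ℕ)
    (x : Fin n → Fin d → ℝ) (y : Fin n → Y)
    (ℓ : ℝ → Y → ℝ) (β lam : ℝ) (hβ : 0 < β)
    (ρ : ℝ) (hρ : ρ = lam / β)
    (C H : Matrix (Fin d) (Fin d) ℝ)
    (hC : C = (n : ℝ)⁻¹ • ∑ i, Matrix.vecMulVec (x i) (x i))
    (hHdef : H = ρ • (1 : Matrix (Fin d) (Fin d) ℝ) + C)
    (hH : H.PosDef)
    (φ : ℝ → Y → ℝ) (hφ : ∀ z y', φ z y' = ℓ z y' - β / 2 * z ^ 2) :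
    (∀ w : Fin d → ℝ,
      (n : ℝ)⁻¹ * ∑ i, ℓ (w ⬝ᵥ x i) (y i) + lam / 2 * (w ⬝ᵥ w)
        = (n : ℝ)⁻¹ * ∑ i,
            φ ((hH.posSemidef.sqrt *ᵥ w) ⬝ᵥ ((hH.posSemidef.sqrt)⁻¹ *ᵥ x i)) (y i)
          + β / 2 * ((hH.posSemidef.sqrt *ᵥ w) ⬝ᵥ (hH.posSemidef.sqrt *ᵥ w))) ∧
    (⨅ v : Fin d → ℝ,
        ((n : ℝ)⁻¹ * ∑ i, φ (v ⬝ᵥ ((hH.posSemidef.sqrt)⁻¹ *ᵥ x i)) (y i)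
          + β / 2 * (v ⬝ᵥ v)))
      = ⨅ w : Fin d → ℝ,
          ((n : ℝ)⁻¹ * ∑ i, ℓ (w ⬝ᵥ x i) (y i) + lam / 2 * (w ⬝ᵥ w)) := by
  have hSu := hH.isUnit_sqrt
  have hS : hH.posSemidef.sqrt.IsSymm := isHermitian_iff_isSymm.mp hH.posSemidef.isHermitian_sqrt
  have hSS := hH.posSemidef.sqrt_mul_self.trans (hC ▸ hHdef)
  have hβρ : β * ρ = lam := by rw [hρ, mul_div_cancel₀ _ hβ.ne']
  have objective_eq := regularized_loss_eq_preconditioned x y ℓ φ hβρ hφ hS hSu hSS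
  refine ⟨objective_eq, ?_⟩
  rw [← (mulVec_surjective_iff_isUnit.mpr hSu).iInf_comp]
  exact iInf_congr fun w => (objective_eq w).symm

/-- with `ρ = λ/β`, `C = (1/n) ∑ x_i x_iᵀ`, `H = ρ I + C` (positive
definite), and `φ(z,y) = ℓ(z,y) - (β/2) z²`, the regularized loss equals the
preconditioned objective at `v = H^{1/2} w`, and hence both problems have the
same infimum. -/
theorem preconditioned_problem_equivalent
    {Y : Type*} (d n : ℕ) (hn : 0 < n)
    (x : Fin n → Fin d → ℝ) (y : Fin n → Y)
    (ℓ : ℝ → Y → ℝ) (β lam : ℝ) (hβ : 0 < β) (hlam : 0 < lam)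
    (ρ : ℝ) (hρ : ρ = lam / β)
    (C H : Matrix (Fin d) (Fin d) ℝ)
    (hC : C = (n : ℝ)⁻¹ • ∑ i, Matrix.vecMulVec (x i) (x i))
    (hHdef : H = ρ • (1 : Matrix (Fin d) (Fin d) ℝ) + C)
    (hH : H.PosDef)
    (φ : ℝ → Y → ℝ) (hφ : ∀ z y', φ z y' = ℓ z y' - β / 2 * z ^ 2) :
    (∀ w : Fin d → ℝ,
      (n : ℝ)⁻¹ * ∑ i, ℓ (w ⬝ᵥ x i) (y i) + lam / 2 * (w ⬝ᵥ w)
        = (n : ℝ)⁻¹ * ∑ i,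
            φ ((hH.posSemidef.sqrt *ᵥ w) ⬝ᵥ ((hH.posSemidef.sqrt)⁻¹ *ᵥ x i)) (y i)
          + β / 2 * ((hH.posSemidef.sqrt *ᵥ w) ⬝ᵥ (hH.posSemidef.sqrt *ᵥ w))) ∧
    (⨅ v : Fin d → ℝ,
        ((n : ℝ)⁻¹ * ∑ i, φ (v ⬝ᵥ ((hH.posSemidef.sqrt)⁻¹ *ᵥ x i)) (y i)
          + β / 2 * (v ⬝ᵥ v)))
      = ⨅ w : Fin d → ℝ,
          ((n : ℝ)⁻¹ * ∑ i, ℓ (w ⬝ᵥ x i) (y i) + lam / 2 * (w ⬝ᵥ w)) :=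
  preconditioned_problem_equivalent_general d n x y ℓ β lam hβ ρ hρ C H hC hHdef hH φ hφ
end

section
/- Let ℓ : ℝ → ℝ be differentiable with L-Lipschitz derivative ℓ′ and suppose (ℓ′(z₁) − ℓ′(z₂))(z₁ − z₂) ≥ β(z₁ − z₂)² for all z₁, z₂ ∈ ℝ with 0 < β ≤ L. Define φ(z) := ℓ(z) − (β/2)z². Let x̂₁, …, x̂_n ∈ ℝ^d satisfy ‖x̂_i‖₂² ≤ B for all i. Then the function F(v) := (1/n) ∑_{i=1}^n φ(vᵀx̂_i) is differentiable and its gradient is (L − β)·B-Lipschitz: ‖∇F(v₁) − ∇F(v₂)‖₂ ≤ (L − β)B‖v₁ − v₂‖₂ for all v₁, v₂ ∈ ℝ^d. In particular, with B = μ(ρ)γ(C, ρ) bounding the preconditioned data norms, the preconditioned problem min_v F(v) + (β/2)‖v‖₂² has a (L − β)μ(ρ)γ(C, ρ)-smooth loss part and β-strongly convex regularizer, so its condition number is bounded by (L − β)μ(ρ)γ(C, ρ)/β. -/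
/-!
Subtracting `β z` from `ℓ'` turns the bounds `β ≤ (ℓ'(z₁) - ℓ'(z₂)) / (z₁ - z₂) ≤ L` on the
difference quotient into `0 ≤ … ≤ L - β`, so `ψ(z) = ℓ'(z) - β z = φ'(z)` is `(L - β)`-Lipschitz.
By the chain rule `∇F(v)` is the average of `ψ(⟪v, x̂ᵢ⟫) x̂ᵢ`, and by Cauchy–Schwarz each term
moves by at most `(L - β) ‖x̂ᵢ‖² ‖v₁ - v₂‖ ≤ (L - β) B ‖v₁ - v₂‖`.
-/

open RealInnerProductSpace Finset

section Gradient

variable {E : Type*} [NormedAddCommGroup E] [InnerProductSpace ℝ E] [CompleteSpace E]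

theorem HasGradientAt.const_mul_sum {ι : Type*} {s : Finset ι} {f : ι → E → ℝ} {g : ι → E}
    {v : E} (c : ℝ) (hf : ∀ i ∈ s, HasGradientAt (f i) (g i) v) :
    HasGradientAt (fun w => c * ∑ i ∈ s, f i w) (c • ∑ i ∈ s, g i) v := by
  simp only [hasGradientAt_iff_hasFDerivAt, map_smul, map_sum] at hf ⊢
  exact (HasFDerivAt.fun_sum hf).const_mul c

theorem HasDerivAt.hasGradientAt_inner_left {φ : ℝ → ℝ} {φ' : ℝ} {v x : E}
    (hφ : HasDerivAt φ φ' ⟪v, x⟫) : HasGradientAt (fun w => φ ⟪w, x⟫) (φ' • x) v := by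
  have hinner : HasFDerivAt (fun w : E => ⟪w, x⟫) (innerSL ℝ x) v := by
    convert (innerSL ℝ x).hasFDerivAt using 1
    exact funext fun w => real_inner_comm x w
  rw [hasGradientAt_iff_hasFDerivAt, map_smul]
  exact hφ.comp_hasFDerivAt v hinner

end Gradient

theorem abs_sub_mul_le_of_abs_le_of_mul_le {u t L β : ℝ} (hu : |u| ≤ L * |t|)
    (hut : β * t ^ 2 ≤ u * t) : |u - β * t| ≤ (L - β) * |t| := by
  rcases lt_trichotomy t 0 with ht | rfl | ht
  · have hβu : u ≤ β * t := by nlinarith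
    rw [abs_of_neg ht] at hu ⊢
    rw [abs_of_nonpos (by linarith : u - β * t ≤ 0)]
    linarith [neg_abs_le u]
  · simp_all
  · have hβu : β * t ≤ u := by nlinarith
    rw [abs_of_pos ht] at hu ⊢
    rw [abs_of_nonneg (by linarith : 0 ≤ u - β * t)]
    linarith [le_abs_self u]

theorem norm_inv_card_smul_sum_le {ι E : Type*} [Fintype ι] [Nonempty ι]
    [SeminormedAddCommGroup E] [NormedSpace ℝ E] {y : ι → E} {C : ℝ} (hy : ∀ i, ‖y i‖ ≤ C) :
    ‖(Fintype.card ι : ℝ)⁻¹ • ∑ i, y i‖ ≤ C := by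
  have hcard : (0 : ℝ) < Fintype.card ι := by exact_mod_cast Fintype.card_pos
  rw [norm_smul, norm_inv, Real.norm_natCast, inv_mul_le_iff₀ hcard]
  calc ‖∑ i, y i‖ ≤ ∑ _i : ι, C := norm_sum_le_of_le _ fun i _ => hy i
    _ = Fintype.card ι * C := by simp

section Lipschitz

variable {E : Type*} [NormedAddCommGroup E] [InnerProductSpace ℝ E]

theorem norm_sub_smul_inner_le {ψ : ℝ → ℝ} {K : ℝ} (hK : 0 ≤ K)
    (hψ : ∀ a b, |ψ a - ψ b| ≤ K * |a - b|) (v₁ v₂ x : E) :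
    ‖(ψ ⟪v₁, x⟫ - ψ ⟪v₂, x⟫) • x‖ ≤ K * ‖x‖ ^ 2 * ‖v₁ - v₂‖ := by
  have hinner : |⟪v₁, x⟫ - ⟪v₂, x⟫| ≤ ‖v₁ - v₂‖ * ‖x‖ := by
    rw [← inner_sub_left]; exact abs_real_inner_le_norm _ _
  calc ‖(ψ ⟪v₁, x⟫ - ψ ⟪v₂, x⟫) • x‖ = |ψ ⟪v₁, x⟫ - ψ ⟪v₂, x⟫| * ‖x‖ := by
        rw [norm_smul, Real.norm_eq_abs]
    _ ≤ K * (‖v₁ - v₂‖ * ‖x‖) * ‖x‖ := by grw [hψ, hinner]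
    _ = K * ‖x‖ ^ 2 * ‖v₁ - v₂‖ := by ring

end Lipschitz

theorem preconditioned_loss_smooth_general
    (d n : ℕ) (hn : 0 < n)
    (ℓ ℓ' : ℝ → ℝ) (L β B : ℝ)
    (hderiv : ∀ z, HasDerivAt ℓ (ℓ' z) z)
    (hL : ∀ z₁ z₂ : ℝ, |ℓ' z₁ - ℓ' z₂| ≤ L * |z₁ - z₂|)
    (hβL : β ≤ L)
    (hcurv : ∀ z₁ z₂ : ℝ, (ℓ' z₁ - ℓ' z₂) * (z₁ - z₂) ≥ β * (z₁ - z₂) ^ 2)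
    (φ : ℝ → ℝ) (hφ : ∀ z, φ z = ℓ z - β / 2 * z ^ 2)
    (xhat : Fin n → EuclideanSpace ℝ (Fin d))
    (hx : ∀ i, ‖xhat i‖ ^ 2 ≤ B)
    (F : EuclideanSpace ℝ (Fin d) → ℝ)
    (hF : ∀ v, F v = (n : ℝ)⁻¹ * ∑ i, φ ⟪v, xhat i⟫)
    (G : EuclideanSpace ℝ (Fin d) → EuclideanSpace ℝ (Fin d))
    (hG : ∀ v, G v = (n : ℝ)⁻¹ • ∑ i, (ℓ' ⟪v, xhat i⟫ - β * ⟪v, xhat i⟫) • xhat i) :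
    (∀ v, HasGradientAt F (G v) v) ∧
      ∀ v₁ v₂ : EuclideanSpace ℝ (Fin d),
        ‖G v₁ - G v₂‖ ≤ (L - β) * B * ‖v₁ - v₂‖ := by
  have hφ' : ∀ z, HasDerivAt φ (ℓ' z - β * z) z := fun z => by
    rw [funext hφ]
    exact ((hderiv z).fun_sub ((hasDerivAt_pow 2 z).const_mul (β / 2))).congr_deriv (by ring)
  have hψ : ∀ a b, |(ℓ' a - β * a) - (ℓ' b - β * b)| ≤ (L - β) * |a - b| := fun a b => by
    convert abs_sub_mul_le_of_abs_le_of_mul_le (hL a b) (hcurv a b) using 2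
    ring
  rw [funext hF, funext hG]
  refine ⟨fun v => .const_mul_sum _ fun i _ => (hφ' _).hasGradientAt_inner_left,
    fun v₁ v₂ => ?_⟩
  have : Nonempty (Fin n) := ⟨⟨0, hn⟩⟩
  simp only [← smul_sub, ← sum_sub_distrib, ← sub_smul]
  simpa using norm_inv_card_smul_sum_le fun i =>
    (norm_sub_smul_inner_le (sub_nonneg.2 hβL) hψ v₁ v₂ (xhat i)).trans (by gcongr; exact hx i)

/-- if `ℓ` is differentiable with `L`-Lipschitz derivative `ℓ'`
satisfying the curvature condition `(ℓ'(z₁) - ℓ'(z₂))(z₁ - z₂) ≥ β(z₁ - z₂)²`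
with `0 < β ≤ L`, `φ(z) = ℓ(z) - (β/2)z²`, and the (preconditioned) data satisfy
`‖x̂_i‖² ≤ B`, then `F(v) = (1/n) ∑ φ(vᵀx̂_i)` is differentiable with gradient
`∇F(v) = (1/n) ∑ (ℓ'(vᵀx̂_i) - β vᵀx̂_i) x̂_i`, which is `(L - β)B`-Lipschitz. -/
theorem preconditioned_loss_smooth
    (d n : ℕ) (hn : 0 < n)
    (ℓ ℓ' : ℝ → ℝ) (L β B : ℝ)
    (hderiv : ∀ z, HasDerivAt ℓ (ℓ' z) z)
    (hL : ∀ z₁ z₂ : ℝ, |ℓ' z₁ - ℓ' z₂| ≤ L * |z₁ - z₂|)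
    (hβ : 0 < β) (hβL : β ≤ L)
    (hcurv : ∀ z₁ z₂ : ℝ, (ℓ' z₁ - ℓ' z₂) * (z₁ - z₂) ≥ β * (z₁ - z₂) ^ 2)
    (φ : ℝ → ℝ) (hφ : ∀ z, φ z = ℓ z - β / 2 * z ^ 2)
    (xhat : Fin n → EuclideanSpace ℝ (Fin d))
    (hx : ∀ i, ‖xhat i‖ ^ 2 ≤ B)
    (F : EuclideanSpace ℝ (Fin d) → ℝ)
    (hF : ∀ v, F v = (n : ℝ)⁻¹ * ∑ i, φ ⟪v, xhat i⟫)
    (G : EuclideanSpace ℝ (Fin d) → EuclideanSpace ℝ (Fin d))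
    (hG : ∀ v, G v = (n : ℝ)⁻¹ • ∑ i, (ℓ' ⟪v, xhat i⟫ - β * ⟪v, xhat i⟫) • xhat i) :
    (∀ v, HasGradientAt F (G v) v) ∧
      ∀ v₁ v₂ : EuclideanSpace ℝ (Fin d),
        ‖G v₁ - G v₂‖ ≤ (L - β) * B * ‖v₁ - v₂‖ :=
  preconditioned_loss_smooth_general d n hn ℓ ℓ' L β B hderiv hL hβL hcurv φ hφ xhat hx F hF G hG
end
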